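/- arXiv:2603.00023 — 2 statements merged into one kernel-verified Lean document; each statement's English description precedes it below -/
import Mathlib

section
/- Let u be uniformly distributed on the unit sphere in ℝ^d (d ≥ 2) and let v ∈ ℝ^d be a nonzero vector. Then E[sign(⟨v,u⟩) u] = ν · v/‖v‖ where ν = E[|u₁|] is the expected absolute value of the first coordinate of u. -/
/-!
Write `m w = ∫ sign ⟪w, u⟫ • u ∂μ`. A linear isometry `R` preserving `μ` satisfies
`m (R w) = R (m w)`. Applied to the reflection in the hyperplane `x^⊥` for some `x ⊥ w`, which
fixes `w` and negates `x`, this shows `⟪x, m w⟫ = 0`; so `m w` is a multiple of `w`, and for a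
unit vector the factor is `⟪w, m w⟫ = ∫ |⟪w, u⟫|`. A reflection carrying a fixed unit vector `e`
to `w` then shows that this factor does not depend on `w`.
-/

open MeasureTheory RealInnerProductSpace

namespace Real

lemma measurable_sign : Measurable Real.sign :=
  Measurable.ite (measurableSet_lt measurable_id measurable_const) measurable_const
    (Measurable.ite (measurableSet_lt measurable_const measurable_id) measurable_const
      measurable_const)

lemma abs_sign_le_one (x : ℝ) : |Real.sign x| ≤ 1 := by
  rcases sign_apply_eq x with h | h | h <;> simp [h]

lemma sign_mul_self (x : ℝ) : Real.sign x * x = |x| := by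
  rcases lt_trichotomy x 0 with h | rfl | h
  · rw [sign_of_neg h, abs_of_neg h, neg_one_mul]
  · simp
  · rw [sign_of_pos h, abs_of_pos h, one_mul]

lemma sign_mul_of_pos {c : ℝ} (hc : 0 < c) (x : ℝ) : Real.sign (c * x) = Real.sign x := by
  rcases lt_trichotomy x 0 with h | rfl | h
  · rw [sign_of_neg h, sign_of_neg (mul_neg_of_pos_of_neg hc h)]
  · simp
  · rw [sign_of_pos h, sign_of_pos (mul_pos hc h)]

end Real

section SignMoment

variable {E : Type*} [NormedAddCommGroup E] [InnerProductSpace ℝ E] [MeasurableSpace E]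
  {μ : Measure E}

lemma integral_sign_inner_smul_smul {c : ℝ} (hc : 0 < c) (w : E) :
    ∫ u, Real.sign ⟪c • w, u⟫ • u ∂μ = ∫ u, Real.sign ⟪w, u⟫ • u ∂μ := by
  simp_rw [real_inner_smul_left, Real.sign_mul_of_pos hc]

variable [BorelSpace E]

lemma integrable_sign_inner_smul (hμ : Integrable (fun u ↦ u) μ) (w : E) :
    Integrable (fun u ↦ Real.sign ⟪w, u⟫ • u) μ :=
  hμ.bdd_smul 1
    (Real.measurable_sign.comp
      (continuous_const.inner continuous_id).measurable).aestronglyMeasurable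
    (ae_of_all _ fun _ ↦ Real.abs_sign_le_one _)

variable [CompleteSpace E]

lemma integral_sign_inner_smul_map (R : E ≃ₗᵢ[ℝ] E) (hR : μ.map R = μ) (w : E) :
    ∫ u, Real.sign ⟪R w, u⟫ • u ∂μ = R (∫ u, Real.sign ⟪w, u⟫ • u ∂μ) :=
  calc ∫ u, Real.sign ⟪R w, u⟫ • u ∂μ
        = ∫ u, Real.sign ⟪R w, R u⟫ • R u ∂μ := by
        conv_lhs => rw [← hR]
        exact R.toHomeomorph.isClosedEmbedding.integral_map _
    _ = ∫ u, R (Real.sign ⟪w, u⟫ • u) ∂μ := by simp_rw [R.inner_map_map, map_smul]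
    _ = R (∫ u, Real.sign ⟪w, u⟫ • u ∂μ) := R.toLinearIsometry.integral_comp_comm _

lemma inner_integral_sign_inner_smul_of_inner_eq_zero
    (hμ : ∀ R : E ≃ₗᵢ[ℝ] E, μ.map R = μ) {w x : E} (hwx : ⟪w, x⟫ = 0) :
    ⟪x, ∫ u, Real.sign ⟪w, u⟫ • u ∂μ⟫ = 0 := by
  set K := (ℝ ∙ x)ᗮ
  have hw : K.reflection w = w :=
    K.reflection_mem_subspace_eq_self
      (Submodule.mem_orthogonal_singleton_iff_inner_left.mpr hwx)
  have hfix :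
      K.reflection (∫ u, Real.sign ⟪w, u⟫ • u ∂μ) = ∫ u, Real.sign ⟪w, u⟫ • u ∂μ := by
    conv_rhs => rw [← hw]
    exact (integral_sign_inner_smul_map _ (hμ _) w).symm
  exact Submodule.mem_orthogonal_singleton_iff_inner_right.mp
    ((K.reflection_eq_self_iff _).mp hfix)

lemma integral_sign_inner_smul_of_norm_eq_one (hint : Integrable (fun u ↦ u) μ)
    (hμ : ∀ R : E ≃ₗᵢ[ℝ] E, μ.map R = μ) {e : E} (he : ‖e‖ = 1) :
    ∫ u, Real.sign ⟪e, u⟫ • u ∂μ = (∫ u, |⟪e, u⟫| ∂μ) • e := by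
  have hspan : ∫ u, Real.sign ⟪e, u⟫ • u ∂μ ∈ ℝ ∙ e := by
    rw [← Submodule.orthogonal_orthogonal (ℝ ∙ e)]
    intro x hx
    exact inner_integral_sign_inner_smul_of_inner_eq_zero hμ
      (Submodule.mem_orthogonal_singleton_iff_inner_right.mp hx)
  obtain ⟨a, ha⟩ := Submodule.mem_span_singleton.mp hspan
  have hinner : ⟪e, ∫ u, Real.sign ⟪e, u⟫ • u ∂μ⟫ = ∫ u, |⟪e, u⟫| ∂μ := by
    rw [← integral_inner (integrable_sign_inner_smul hint e)]
    simp_rw [real_inner_smul_right, Real.sign_mul_self]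
  rw [← ha, real_inner_smul_right, real_inner_self_eq_norm_sq, he, one_pow, mul_one]
    at hinner
  rw [← ha, hinner]

theorem integral_sign_inner_smul (hint : Integrable (fun u ↦ u) μ)
    (hμ : ∀ R : E ≃ₗᵢ[ℝ] E, μ.map R = μ) {e : E} (he : ‖e‖ = 1) {v : E} (hv : v ≠ 0) :
    ∫ u, Real.sign ⟪v, u⟫ • u ∂μ = (∫ u, |⟪e, u⟫| ∂μ) • (‖v‖⁻¹ • v) := by
  set w := ‖v‖⁻¹ • v
  set R := (ℝ ∙ (e - w))ᗮ.reflection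
  have hRe : R e = w := Submodule.reflection_sub (he.trans (norm_smul_inv_norm hv).symm)
  calc ∫ u, Real.sign ⟪v, u⟫ • u ∂μ = ∫ u, Real.sign ⟪w, u⟫ • u ∂μ :=
        (integral_sign_inner_smul_smul (inv_pos.mpr (norm_pos_iff.mpr hv)) v).symm
    _ = R (∫ u, Real.sign ⟪e, u⟫ • u ∂μ) := by
        rw [← hRe, integral_sign_inner_smul_map R (hμ R)]
    _ = (∫ u, |⟪e, u⟫| ∂μ) • w := by
        rw [integral_sign_inner_smul_of_norm_eq_one hint hμ he, map_smul, hRe]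

end SignMoment

theorem stmt4 (d : ℕ) (hd : 2 ≤ d)
    (μ : Measure (EuclideanSpace ℝ (Fin d))) [IsProbabilityMeasure μ]
    (hsphere : ∀ᵐ u ∂μ, ‖u‖ = 1)
    (hrot : ∀ R : EuclideanSpace ℝ (Fin d) ≃ₗᵢ[ℝ] EuclideanSpace ℝ (Fin d),
      Measure.map (⇑R) μ = μ)
    (v : EuclideanSpace ℝ (Fin d)) (hv : v ≠ 0) :
    ∫ u, Real.sign ⟪v, u⟫ • u ∂μ
      = (∫ u, |u ⟨0, by omega⟩| ∂μ) • (‖v‖⁻¹ • v) := by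
  have hint : Integrable (fun u ↦ u) μ :=
    Integrable.of_bound aestronglyMeasurable_id 1 (hsphere.mono fun _ hu ↦ hu.le)
  have he : ‖EuclideanSpace.single (⟨0, by omega⟩ : Fin d) (1 : ℝ)‖ = 1 := by simp
  rw [integral_sign_inner_smul hint hrot he hv]
  simp [EuclideanSpace.inner_single_left]
end

section
/- Let f : ℝ^d → ℝ be differentiable with L-Lipschitz gradient, x ∈ ℝ^d, u a unit vector, and ν > 0. If |⟨u, ∇f(x)⟩| > Lν/2, then sign(f(x + νu) - f(x - νu)) = sign(⟨u, ∇f(x)⟩). -/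
/-!
Write `c = ⟪u, ∇f(x)⟫`. The descent lemma for an `L`-smooth function, applied at `x` in the
directions `±νu`, shows that the central difference `f(x + νu) - f(x - νu)` lies within `Lν²`
of `2νc`. The hypothesis says exactly that `Lν² < 2ν|c|`, so the difference has the sign of `c`.
-/

open RealInnerProductSpace Set

theorem Real.sign_eq_of_abs_sub_mul_lt {a b t : ℝ} (h : |a - t * b| < t * |b|) :
    Real.sign a = Real.sign b := by
  obtain ⟨h₁, h₂⟩ := abs_lt.mp h
  rcases lt_trichotomy b 0 with hb | rfl | hb
  · rw [abs_of_neg hb] at h₂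
    rw [Real.sign_of_neg (by nlinarith), Real.sign_of_neg hb]
  · simp only [abs_zero, mul_zero, sub_zero] at h
    exact absurd h (abs_nonneg a).not_gt
  · rw [abs_of_pos hb] at h₁
    rw [Real.sign_of_pos (by nlinarith), Real.sign_of_pos hb]

section LSmooth

variable {E : Type*} [NormedAddCommGroup E] [InnerProductSpace ℝ E] [CompleteSpace E]
  {f : E → ℝ} {g : E → E} {L : ℝ}

theorem HasGradientAt.hasDerivAt_comp_add_smul {x v : E} {t : ℝ}
    (hf : HasGradientAt f (g (x + t • v)) (x + t • v)) :
    HasDerivAt (fun s : ℝ => f (x + s • v)) ⟪g (x + t • v), v⟫ t := by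
  have hline : HasDerivAt (fun s : ℝ => x + s • v) v t := by
    simpa using ((hasDerivAt_id t).smul_const v).const_add x
  exact hf.hasFDerivAt.comp_hasDerivAt t hline

theorem abs_sub_sub_inner_le_of_lipschitz_gradient (hg : ∀ y, HasGradientAt f (g y) y)
    (hLip : ∀ y z, ‖g y - g z‖ ≤ L * ‖y - z‖) (x v : E) :
    |f (x + v) - f x - ⟪g x, v⟫| ≤ L / 2 * ‖v‖ ^ 2 := by
  set ψ : ℝ → ℝ := fun t => f (x + t • v) - f x - t * ⟪g x, v⟫
  have hψ : ∀ t, HasDerivAt ψ (⟪g (x + t • v), v⟫ - ⟪g x, v⟫) t := fun t =>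
    ((hg _).hasDerivAt_comp_add_smul.sub_const (f x)).sub (hasDerivAt_mul_const _)
  have hψ' :
      ∀ t ∈ Ico (0 : ℝ) 1, ‖⟪g (x + t • v), v⟫ - ⟪g x, v⟫‖ ≤ L * ‖v‖ ^ 2 * t := by
    intro t ht
    calc ‖⟪g (x + t • v), v⟫ - ⟪g x, v⟫‖ = |⟪g (x + t • v) - g x, v⟫| := by
          rw [inner_sub_left, Real.norm_eq_abs]
      _ ≤ ‖g (x + t • v) - g x‖ * ‖v‖ := abs_real_inner_le_norm _ _
      _ ≤ L * ‖x + t • v - x‖ * ‖v‖ := by gcongr; exact hLip _ _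
      _ = L * ‖v‖ ^ 2 * t := by
          rw [add_sub_cancel_left, norm_smul, Real.norm_of_nonneg ht.1]; ring
  have hB : ∀ t : ℝ, HasDerivAt (fun t => L / 2 * ‖v‖ ^ 2 * t ^ 2) (L * ‖v‖ ^ 2 * t) t :=
    fun t => ((hasDerivAt_pow 2 t).const_mul _).congr_deriv (by norm_num; ring)
  have := image_norm_le_of_norm_deriv_right_le_deriv_boundary
    (fun t _ => (hψ t).continuousAt.continuousWithinAt) (fun t _ => (hψ t).hasDerivWithinAt)
    (by simp [ψ]) hB hψ' (right_mem_Icc.mpr zero_le_one)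
  simpa only [ψ, one_smul, one_mul, one_pow, mul_one, Real.norm_eq_abs] using this

theorem abs_sub_sub_two_mul_inner_le_of_lipschitz_gradient
    (hg : ∀ y, HasGradientAt f (g y) y) (hLip : ∀ y z, ‖g y - g z‖ ≤ L * ‖y - z‖) (x v : E) :
    |f (x + v) - f (x - v) - 2 * ⟪g x, v⟫| ≤ L * ‖v‖ ^ 2 := by
  have hplus := abs_sub_sub_inner_le_of_lipschitz_gradient hg hLip x v
  have hminus := abs_sub_sub_inner_le_of_lipschitz_gradient hg hLip x (-v)
  rw [← sub_eq_add_neg, inner_neg_right, norm_neg] at hminus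
  calc |f (x + v) - f (x - v) - 2 * ⟪g x, v⟫|
      = |(f (x + v) - f x - ⟪g x, v⟫) - (f (x - v) - f x - -⟪g x, v⟫)| := by congr 1; ring
    _ ≤ |f (x + v) - f x - ⟪g x, v⟫| + |f (x - v) - f x - -⟪g x, v⟫| := abs_sub _ _
    _ ≤ L * ‖v‖ ^ 2 := by linarith

end LSmooth

theorem stmt9 (d : ℕ) (f : EuclideanSpace ℝ (Fin d) → ℝ)
    (g : EuclideanSpace ℝ (Fin d) → EuclideanSpace ℝ (Fin d)) (L : ℝ)
    (hg : ∀ y, HasGradientAt f (g y) y)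
    (hLip : ∀ y z, ‖g y - g z‖ ≤ L * ‖y - z‖)
    (x u : EuclideanSpace ℝ (Fin d)) (hu : ‖u‖ = 1) (ν : ℝ) (hν : 0 < ν)
    (hbig : L * ν / 2 < |⟪u, g x⟫|) :
    Real.sign (f (x + ν • u) - f (x - ν • u)) = Real.sign ⟪u, g x⟫ := by
  have hdiff := abs_sub_sub_two_mul_inner_le_of_lipschitz_gradient hg hLip x (ν • u)
  rw [real_inner_smul_right, real_inner_comm, norm_smul, hu, Real.norm_of_nonneg hν.le,
    ← mul_assoc] at hdiff
  refine Real.sign_eq_of_abs_sub_mul_lt (hdiff.trans_lt ?_)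
  calc L * (ν * 1) ^ 2 = 2 * ν * (L * ν / 2) := by ring
    _ < 2 * ν * |⟪u, g x⟫| := by gcongr
end
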